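/- There exists a (central, non-ticketed) learning–unlearning scheme for the augmented class of point functions (point functions together with the all-zero function) with space complexity C = O(log|X| + log n), valid for all realizable datasets of size n: Learn(S) returns h ∈ ERM(S) and auxiliary information of O(log|X| + log n) bits, and for every I ⊆ [n], Unlearn(S_I, aux) returns the same hypothesis that Learn returns on S ∖ S_I. -/

import Mathlib

/-- Empirical loss of hypothesis `h` on dataset `S` (sum of 0-1 losses). -/
def empLoss {X : Type} (h : X → Bool) (S : List (X × Bool)) : ℕ :=
  (S.map fun z => if h z.1 = z.2 then 0 else 1).sum

/-- A dataset is `H`-realizable if some hypothesis in `H` has zero empirical loss on it. -/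
def IsRealizable {X : Type} (H : Set (X → Bool)) (S : List (X × Bool)) : Prop :=
  ∃ h ∈ H, empLoss h S = 0

/-- The set of empirical risk minimizers in `H` on the dataset `S`. -/
def ERM {X : Type} (H : Set (X → Bool)) (S : List (X × Bool)) : Set (X → Bool) :=
  {h | h ∈ H ∧ ∀ g ∈ H, empLoss h S ≤ empLoss g S}

/-- The surviving dataset `S ∖ S_I`: the examples of `S` at indices outside `I`,
kept in their original order. -/
def surviving {Z : Type} (S : List Z) (I : Finset (Fin S.length)) : List Z :=
  ((List.finRange S.length).filter fun i => decide (i ∉ I)).map S.get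

/-- The unlearning request `S_I`: the examples of `S` at indices in `I`,
in their original order. -/
def removedList {Z : Type} (S : List Z) (I : Finset (Fin S.length)) : List Z :=
  ((List.finRange S.length).filter fun i => decide (i ∈ I)).map S.get

/-- The point function `h_a(x) = 1{x = a}` on the domain `Fin N` (representing `{1, …, N}`). -/
def pointFn {N : ℕ} (a : Fin N) : Fin N → Bool := fun x => decide (x = a)

/-- The class of point functions over `Fin N` augmented with the all-zero function. -/
def HptZero (N : ℕ) : Set (Fin N → Bool) := Set.range pointFn ∪ {fun _ => false}

/-! In a realizable dataset all positive examples sit at the same point `a`, so the learner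
outputs `h_a` if some example is positive and the zero function otherwise. After deleting `S_I`
the answer is still `h_a` exactly when some positive example survives, i.e. when `S_I` contains
fewer positive examples than `S`. Hence it suffices to store the optional point `a` together with
the number of positive examples of `S`, which fits in `⌈log₂ |X|⌉ + ⌈log₂ n⌉ + 2` bits. -/

section Loss

variable {X : Type}

lemma empLoss_eq_zero_iff {h : X → Bool} {S : List (X × Bool)} :
    empLoss h S = 0 ↔ ∀ z ∈ S, h z.1 = z.2 := by
  simp only [empLoss, List.sum_eq_zero_iff, List.forall_mem_map, ite_eq_left_iff, one_ne_zero,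
    imp_false, not_not]

lemma mem_ERM_of_empLoss_eq_zero {H : Set (X → Bool)} {h : X → Bool} {S : List (X × Bool)}
    (hH : h ∈ H) (h0 : empLoss h S = 0) : h ∈ ERM H S :=
  ⟨hH, fun _ _ => h0 ▸ Nat.zero_le _⟩

end Loss

section Deletion

variable {Z : Type} (S : List Z) (I : Finset (Fin S.length))

lemma surviving_sublist : (surviving S I).Sublist S := by
  have := ((List.finRange S.length).filter_sublist (p := fun i => decide (i ∉ I))).map S.get
  rwa [List.map_get_finRange] at this

lemma countP_surviving_add_countP_removedList (p : Z → Bool) :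
    (surviving S I).countP p + (removedList S I).countP p = S.countP p := by
  conv_rhs => rw [← List.map_get_finRange S]
  simp only [surviving, removedList, List.countP_map, decide_not]
  rw [add_comm]
  exact (List.countP_eq_countP_filter_add _ _ _).symm

end Deletion

section PointFunctions

variable {N : ℕ}

def posCount (S : List (Fin N × Bool)) : ℕ := S.countP (·.2)

def firstPos (S : List (Fin N × Bool)) : Option (Fin N) := (S.find? (·.2)).map Prod.fst

def pointFnOrZero : Option (Fin N) → Fin N → Bool
  | some a => pointFn a
  | none => fun _ => false

lemma pointFnOrZero_mem_HptZero (o : Option (Fin N)) : pointFnOrZero o ∈ HptZero N := by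
  cases o with
  | some a => exact Or.inl ⟨a, rfl⟩
  | none => exact Or.inr rfl

lemma firstPos_eq_none_iff {S : List (Fin N × Bool)} : firstPos S = none ↔ posCount S = 0 := by
  simp [firstPos, posCount, List.find?_eq_none, List.countP_eq_zero]

lemma mem_of_firstPos_eq_some {S : List (Fin N × Bool)} {a : Fin N} (h : firstPos S = some a) :
    (a, true) ∈ S := by
  obtain ⟨z, hz, rfl⟩ := Option.map_eq_some_iff.1 h
  have hpos : z.2 = true := List.find?_some hz
  simpa [← hpos] using List.mem_of_find?_eq_some hz

lemma empLoss_pointFn_eq_zero {S : List (Fin N × Bool)} (hS : IsRealizable (HptZero N) S)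
    {a : Fin N} (ha : (a, true) ∈ S) : empLoss (pointFn a) S = 0 := by
  obtain ⟨h, hH, h0⟩ := hS
  rw [empLoss_eq_zero_iff] at h0 ⊢
  rcases hH with ⟨b, rfl⟩ | rfl
  · obtain rfl : a = b := by simpa [pointFn] using h0 _ ha
    exact h0
  · exact absurd (h0 _ ha) Bool.false_ne_true

lemma empLoss_pointFnOrZero_firstPos {S : List (Fin N × Bool)}
    (hS : IsRealizable (HptZero N) S) : empLoss (pointFnOrZero (firstPos S)) S = 0 := by
  cases hfirst : firstPos S with
  | some a => exact empLoss_pointFn_eq_zero hS (mem_of_firstPos_eq_some hfirst)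
  | none =>
    have hneg := List.countP_eq_zero.1 (firstPos_eq_none_iff.1 hfirst)
    exact empLoss_eq_zero_iff.2 fun z hz => by simpa [pointFnOrZero] using hneg z hz

lemma firstPos_eq_of_sublist {S T : List (Fin N × Bool)} (hS : IsRealizable (HptZero N) S)
    (hTS : T.Sublist S) (hT : posCount T ≠ 0) : firstPos T = firstPos S := by
  obtain ⟨b, hb⟩ := Option.ne_none_iff_exists'.1 (mt firstPos_eq_none_iff.1 hT)
  have hbS : (b, true) ∈ S := hTS.subset (mem_of_firstPos_eq_some hb)
  have hS0 : posCount S ≠ 0 := fun h0 => by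
    simpa using List.countP_eq_zero.1 h0 _ hbS
  obtain ⟨a, ha⟩ := Option.ne_none_iff_exists'.1 (mt firstPos_eq_none_iff.1 hS0)
  have hab := empLoss_eq_zero_iff.1 (empLoss_pointFn_eq_zero hS (mem_of_firstPos_eq_some ha)) _ hbS
  have hba : b = a := by simpa [pointFn] using hab
  rw [hb, ha, hba]

lemma pointFnOrZero_firstPos_surviving {S : List (Fin N × Bool)}
    (hS : IsRealizable (HptZero N) S) (I : Finset (Fin S.length)) :
    pointFnOrZero (firstPos (surviving S I)) =
      if posCount (removedList S I) < posCount S then pointFnOrZero (firstPos S)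
      else fun _ => false := by
  have hsplit := countP_surviving_add_countP_removedList S I (·.2)
  by_cases hT : posCount (surviving S I) = 0
  · rw [if_neg (by unfold posCount at *; omega), firstPos_eq_none_iff.2 hT, pointFnOrZero]
  · rw [if_pos (by unfold posCount at *; omega),
      firstPos_eq_of_sublist hS (surviving_sublist S I) hT]

end PointFunctions

section Scheme

variable {N : ℕ}

/-- The count of positive examples is capped at `n` only to land in `Fin (n + 1)`. -/
def schemeAux (n : ℕ) (S : List (Fin N × Bool)) : Option (Fin N) × Fin (n + 1) :=
  (firstPos S, ⟨min (posCount S) n, Nat.lt_succ_of_le (min_le_right _ _)⟩)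

def unlearnOfAux {n : ℕ} (R : List (Fin N × Bool)) (aux : Option (Fin N) × Fin (n + 1)) :
    Fin N → Bool :=
  if posCount R < aux.2 then pointFnOrZero aux.1 else fun _ => false

lemma unlearnOfAux_schemeAux {n : ℕ} {S : List (Fin N × Bool)} (hS : IsRealizable (HptZero N) S)
    (hlen : S.length ≤ n) (I : Finset (Fin S.length)) :
    unlearnOfAux (removedList S I) (schemeAux n S) = pointFnOrZero (firstPos (surviving S I)) := by
  have hcount : min (posCount S) n = posCount S :=
    min_eq_left ((List.countP_le_length).trans hlen)
  simp only [unlearnOfAux, schemeAux, hcount, pointFnOrZero_firstPos_surviving hS I]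

lemma succ_le_two_pow_clog_succ (n : ℕ) : n + 1 ≤ 2 ^ (Nat.clog 2 n + 1) := by
  have := Nat.le_pow_clog one_lt_two n
  have := Nat.one_le_two_pow (n := Nat.clog 2 n)
  rw [pow_succ]
  omega

lemma nonempty_embedding_schemeAux (N n : ℕ) :
    Nonempty (Option (Fin N) × Fin (n + 1) ↪ (Fin (Nat.clog 2 N + Nat.clog 2 n + 2) → Bool)) := by
  refine Function.Embedding.nonempty_of_card_le ?_
  simp only [Fintype.card_prod, Fintype.card_option, Fintype.card_fin, Fintype.card_fun,
    Fintype.card_bool]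
  calc (N + 1) * (n + 1) ≤ 2 ^ (Nat.clog 2 N + 1) * 2 ^ (Nat.clog 2 n + 1) :=
        Nat.mul_le_mul (succ_le_two_pow_clog_succ N) (succ_le_two_pow_clog_succ n)
    _ = 2 ^ (Nat.clog 2 N + Nat.clog 2 n + 2) := by rw [← pow_add]; ring_nf

end Scheme

/-- **Theorem (central LU scheme for point functions augmented with zero).** There is a
constant `c` such that for every domain size `N` and dataset size `n` there is a central
(non-ticketed) learning–unlearning scheme for the class of point functions together with
the all-zero function, valid for all realizable datasets of size (at most) `n`, whose
auxiliary information has at most `c · (log N + log n) = O(log|X| + log n)` bits. -/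
theorem augmented_point_functions_central_lu :
    ∃ c : ℕ, 0 < c ∧
      ∀ N n : ℕ, ∃ cs : ℕ,
        cs ≤ c * (Nat.clog 2 N + Nat.clog 2 n + 1) ∧
        ∃ (Learn : List (Fin N × Bool) → (Fin N → Bool) × (Fin cs → Bool))
          (Unlearn : List (Fin N × Bool) → (Fin cs → Bool) → (Fin N → Bool)),
          ∀ S : List (Fin N × Bool), S.length ≤ n → IsRealizable (HptZero N) S →
            (Learn S).1 ∈ ERM (HptZero N) S ∧
            ∀ I : Finset (Fin S.length),
              Unlearn (removedList S I) (Learn S).2 = (Learn (surviving S I)).1 := by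
  refine ⟨2, two_pos, fun N n => ⟨Nat.clog 2 N + Nat.clog 2 n + 2, by omega, ?_⟩⟩
  obtain ⟨encode⟩ := nonempty_embedding_schemeAux N n
  refine ⟨fun S => (pointFnOrZero (firstPos S), encode (schemeAux n S)),
    fun R bits => unlearnOfAux R (Function.invFun encode bits), fun S hlen hS => ⟨?_, fun I => ?_⟩⟩
  · exact mem_ERM_of_empLoss_eq_zero (pointFnOrZero_mem_HptZero _)
      (empLoss_pointFnOrZero_firstPos hS)
  · simp only [Function.leftInverse_invFun encode.injective _]
    exact unlearnOfAux_schemeAux hS hlen I
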